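/- For every partial computable integer-valued martingale m there is a pb-dense set of strings S such that every σ ∈ S satisfies m(σ') = m(σ) for every extension σ' of σ on which m is defined; consequently every pb-generic real has a prefix beyond which m never changes its capital. -/

import Mathlib

namespace IVR

/-! ### Finite binary strings and infinite binary sequences -/

/-- The length-`n` prefix of an infinite binary sequence `X`, as a finite binary string. -/
def str (X : ℕ → Bool) (n : ℕ) : List Bool := (List.range n).map X

/-- A standard encoding of the rationals into the natural numbers
(used to express computability of rational-valued functions). -/
def qenc (q : ℚ) : ℕ := Nat.pair (Encodable.encode q.num) q.den

/-! ### Martingales -/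

/-- A (total) martingale: a nonnegative function on binary strings satisfying
the fairness condition `f σ = (f (σ0) + f (σ1))/2`. -/
structure Martingale where
  toFun : List Bool → ℚ
  nonneg : ∀ σ, 0 ≤ toFun σ
  fair : ∀ σ : List Bool, toFun σ = (toFun (σ ++ [false]) + toFun (σ ++ [true])) / 2

/-- A martingale is integer-valued if each bet is an integer amount:
`f (σi) = f σ ± k` for some natural number `k`. -/
def Martingale.IntegerValued (f : Martingale) : Prop :=
  ∀ σ b, ∃ k : ℕ, f.toFun (σ ++ [b]) = f.toFun σ + k ∨ f.toFun (σ ++ [b]) = f.toFun σ - k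

/-- Computability of a martingale. -/
def Martingale.Comp (f : Martingale) : Prop := Computable fun σ => qenc (f.toFun σ)

/-- A martingale succeeds on `X` if `limsup_n f (X↾n) = ∞`. -/
def Martingale.Succeeds (f : Martingale) (X : ℕ → Bool) : Prop :=
  ∀ c : ℚ, ∀ m : ℕ, ∃ n, m ≤ n ∧ c < f.toFun (str X n)

/-- `X` is integer-valued random if no computable integer-valued martingale succeeds on it. -/
def IVRandom (X : ℕ → Bool) : Prop :=
  ∀ f : Martingale, f.IntegerValued → f.Comp → ¬ f.Succeeds X

/-- A partial martingale: a partial function on binary strings whose domain is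
closed under prefixes and which satisfies the fairness condition wherever defined. -/
structure PartialMartingale where
  toFun : List Bool →. ℚ
  nonneg : ∀ σ q, q ∈ toFun σ → 0 ≤ q
  domClosed : ∀ σ τ : List Bool, σ <+: τ → (toFun τ).Dom → (toFun σ).Dom
  siblings : ∀ σ b, (toFun (σ ++ [b])).Dom → (toFun (σ ++ [!b])).Dom
  fair : ∀ σ q0 q1, q0 ∈ toFun (σ ++ [false]) → q1 ∈ toFun (σ ++ [true]) →
    ((q0 + q1) / 2) ∈ toFun σ

/-- A partial martingale is integer-valued if each bet is an integer amount. -/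
def PartialMartingale.IntegerValued (m : PartialMartingale) : Prop :=
  ∀ σ b q q', q ∈ m.toFun σ → q' ∈ m.toFun (σ ++ [b]) →
    ∃ k : ℕ, q' = q + k ∨ q' = q - k

/-- Partial computability of a partial martingale. -/
def PartialMartingale.Comp (m : PartialMartingale) : Prop :=
  Partrec fun σ => (m.toFun σ).map qenc

/-- A partial martingale succeeds on `X` if `limsup_n m (X↾n) = ∞`. -/
def PartialMartingale.Succeeds (m : PartialMartingale) (X : ℕ → Bool) : Prop :=
  ∀ c : ℚ, ∀ k : ℕ, ∃ n, k ≤ n ∧ ∃ q ∈ m.toFun (str X n), c < q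

/-- `X` is partial integer-valued random if no partial computable integer-valued
martingale succeeds on it. -/
def PartialIVRandom (X : ℕ → Bool) : Prop :=
  ∀ m : PartialMartingale, m.IntegerValued → m.Comp → ¬ m.Succeeds X

/-! ### Oracle computability, Turing reducibility, the jump -/

/-- Codes for partial functions computable relative to an oracle
(Kleene-style, following `Nat.Partrec.Code` with an extra `oracle` constructor). -/
inductive OCode : Type
  | zero
  | succ
  | left
  | right
  | oracle
  | pair (cf cg : OCode)
  | comp (cf cg : OCode)
  | prec (cf cg : OCode)
  | rfind' (cf : OCode)

/-- Evaluation of an oracle code relative to a (partial) oracle `O`. -/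
def OCode.eval (O : ℕ →. ℕ) : OCode → ℕ →. ℕ
  | .zero => fun _ => Part.some 0
  | .succ => fun n => Part.some (n + 1)
  | .left => fun n => Part.some n.unpair.1
  | .right => fun n => Part.some n.unpair.2
  | .oracle => O
  | .pair cf cg => fun n => Nat.pair <$> OCode.eval O cf n <*> OCode.eval O cg n
  | .comp cf cg => fun n => OCode.eval O cg n >>= OCode.eval O cf
  | .prec cf cg =>
    Nat.unpaired fun a n =>
      n.rec (OCode.eval O cf a) fun y IH => do
        let i ← IH
        OCode.eval O cg (Nat.pair a (Nat.pair y i))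
  | .rfind' cf =>
    Nat.unpaired fun a m =>
      (Nat.rfind fun n => (fun x => x = 0) <$> OCode.eval O cf (Nat.pair a (n + m))).map (· + m)

/-- A numbering of the oracle codes. -/
def OCode.ofNat : ℕ → OCode
  | 0 => .zero
  | 1 => .succ
  | 2 => .left
  | 3 => .right
  | 4 => .oracle
  | n + 5 =>
    let m := n.div2.div2
    have hm : m < n + 5 := by
      simp only [m, Nat.div2_val]
      exact lt_of_le_of_lt (le_trans (Nat.div_le_self _ _) (Nat.div_le_self _ _)) (by omega)
    have _m1 : m.unpair.1 < n + 5 := lt_of_le_of_lt m.unpair_left_le hm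
    have _m2 : m.unpair.2 < n + 5 := lt_of_le_of_lt m.unpair_right_le hm
    match n.bodd, n.div2.bodd with
    | false, false => .pair (OCode.ofNat m.unpair.1) (OCode.ofNat m.unpair.2)
    | false, true  => .comp (OCode.ofNat m.unpair.1) (OCode.ofNat m.unpair.2)
    | true , false => .prec (OCode.ofNat m.unpair.1) (OCode.ofNat m.unpair.2)
    | true , true  => .rfind' (OCode.ofNat m)
decreasing_by
  all_goals
    have h1 := Nat.unpair_left_le (n.div2.div2)
    have h2 := Nat.unpair_right_le (n.div2.div2)
    have h3 : n.div2.div2 ≤ n := by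
      simp only [Nat.div2_val]
      exact le_trans (Nat.div_le_self _ _) (Nat.div_le_self _ _)
    simp_wf
    omega

/-- The characteristic function of a set of naturals / infinite binary sequence. -/
def charFn (A : ℕ → Bool) : ℕ →. ℕ := fun n => Part.some (cond (A n) 1 0)

/-- `f` is partial computable relative to the oracle `O`. -/
def RecIn (f : ℕ →. ℕ) (O : ℕ →. ℕ) : Prop := ∃ c : OCode, OCode.eval O c = f

/-- Turing reducibility. -/
def TLE (A B : ℕ → Bool) : Prop := RecIn (charFn A) (charFn B)

/-- Turing equivalence. -/
def TEquiv (A B : ℕ → Bool) : Prop := TLE A B ∧ TLE B A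

/-- A function `g : ℕ → ℕ` is computable from `A`. -/
def FnTLE (g : ℕ → ℕ) (A : ℕ → Bool) : Prop := RecIn (fun n => Part.some (g n)) (charFn A)

/-- The Turing jump of `A`: the halting problem relative to `A`. -/
noncomputable def jump (A : ℕ → Bool) : ℕ → Bool := fun e =>
  @decide ((OCode.eval (charFn A) (OCode.ofNat e) e).Dom) (Classical.propDecidable _)

/-- The empty set. -/
def emptySet : ℕ → Bool := fun _ => false

/-- The halting problem `∅'`. -/
noncomputable def K : ℕ → Bool := jump emptySet

/-- `∅''`. -/
noncomputable def K2 : ℕ → Bool := jump K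

/-- `∅'''`. -/
noncomputable def K3 : ℕ → Bool := jump K2

/-- Weak truth table reducibility: `A` is Turing reducible to `B` via a reduction
whose use is bounded by a computable function `u` -- the computation on input `n`
only depends on the first `u n` bits of the oracle. -/
def WttLE (A B : ℕ → Bool) : Prop :=
  ∃ (c : OCode) (u : ℕ → ℕ), Computable u ∧
    ∀ (n : ℕ) (B' : ℕ → Bool), (∀ k < u n, B' k = B k) →
      OCode.eval (charFn B') c n = Part.some (cond (A n) 1 0)

/-- Weak truth table equivalence. -/
def WttEquiv (A B : ℕ → Bool) : Prop := WttLE A B ∧ WttLE B A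

/-- Weak truth table reducibility of a function `f : ℕ → ℕ` to a set `B`. -/
def FnWttLE (f : ℕ → ℕ) (B : ℕ → Bool) : Prop :=
  ∃ (c : OCode) (u : ℕ → ℕ), Computable u ∧
    ∀ (n : ℕ) (B' : ℕ → Bool), (∀ k < u n, B' k = B k) →
      OCode.eval (charFn B') c n = Part.some (f n)

/-- `A` has array noncomputable Turing degree: for every `f ≤wtt ∅'` there is an
`A`-computable function `g` with `g n > f n` for infinitely many `n`. -/
def ArrayNoncomputable (A : ℕ → Bool) : Prop :=
  ∀ f : ℕ → ℕ, FnWttLE f K → ∃ g : ℕ → ℕ, FnTLE g A ∧ ∀ m, ∃ n, m ≤ n ∧ f n < g n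

/-- `A` is computably enumerable. -/
def CE (A : ℕ → Bool) : Prop :=
  ∃ f : ℕ →. ℕ, Nat.Partrec f ∧ ∀ n, A n = true ↔ (f n).Dom

/-- `S` is computably enumerable relative to `O`. -/
def CEIn (S : ℕ → Bool) (O : ℕ → Bool) : Prop :=
  ∃ f : ℕ →. ℕ, RecIn f (charFn O) ∧ ∀ n, S n = true ↔ (f n).Dom

/-- `A` has high Turing degree: the jump of `A` computes `∅''`. -/
def High (A : ℕ → Bool) : Prop := TLE K2 (jump A)

/-- `A` has high₂ Turing degree: the double jump of `A` computes `∅'''`. -/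
def High2 (A : ℕ → Bool) : Prop := TLE K3 (jump (jump A))

/-- `A` has low Turing degree: the jump of `A` is Turing equivalent to `∅'`. -/
def Low (A : ℕ → Bool) : Prop := TEquiv (jump A) K

/-! ### Left-c.e. reals -/

/-- The real number with binary expansion `X`. -/
noncomputable def binaryVal (X : ℕ → Bool) : ℝ :=
  ∑' n, cond (X n) ((2 : ℝ)⁻¹ ^ (n + 1)) 0

/-- `X` is a left-c.e. real: the limit of a computable increasing sequence of rationals. -/
def LeftCE (X : ℕ → Bool) : Prop :=
  ∃ q : ℕ → ℚ, Computable (fun n => qenc (q n)) ∧ (∀ n, q n ≤ q (n + 1)) ∧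
    Filter.Tendsto (fun n => (q n : ℝ)) Filter.atTop (nhds (binaryVal X))

/-! ### Genericity -/

/-- A set of strings `S` is pb-dense: it contains the range of a function
`f` with `f σ ⊒ σ` which has a computable approximation whose number of
mind-changes on `σ` is bounded by a primitive recursive function `h`. -/
def PbDense (S : Set (List Bool)) : Prop :=
  ∃ (f : List Bool → List Bool) (F : ℕ → List Bool → List Bool) (h : List Bool → ℕ),
    Computable₂ F ∧ Primrec h ∧
    (∀ σ, σ <+: f σ) ∧
    (∀ σ, ∃ s₀, ∀ s, s₀ ≤ s → F s σ = f σ) ∧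
    (∀ σ, {s : ℕ | F (s + 1) σ ≠ F s σ}.Finite ∧
      {s : ℕ | F (s + 1) σ ≠ F s σ}.ncard ≤ h σ) ∧
    (∀ σ, f σ ∈ S)

/-- `X` is pb-generic: it has a prefix in every pb-dense set of strings. -/
def PbGeneric (X : ℕ → Bool) : Prop :=
  ∀ S : Set (List Bool), PbDense S → ∃ n, str X n ∈ S

/-- A computably enumerable set of strings. -/
def CEStrings (W : Set (List Bool)) : Prop :=
  ∃ f : List Bool →. ℕ, Partrec f ∧ ∀ σ, σ ∈ W ↔ (f σ).Dom

/-- `X` is 1-generic: for every c.e. set of strings `W`, either `X` has a prefix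
in `W`, or `X` has a prefix no extension of which lies in `W`. -/
def OneGeneric (X : ℕ → Bool) : Prop :=
  ∀ W : Set (List Bool), CEStrings W →
    (∃ n, str X n ∈ W) ∨ (∃ n, ∀ τ : List Bool, str X n <+: τ → τ ∉ W)

/-! The capital of an integer-valued martingale drops only by whole units, and on strings of
length `n` it is at most `2 ^ n` times the initial capital. So the search "from `σ`, move to an
extension on which `m` has already been seen to take a smaller value" moves at most `C * 2 ^ |σ|`
times, a primitive recursive bound. Its limit `τ` has no extension of smaller capital, and by
fairness the capital is then constant above `τ`. -/

open Nat.Partrec (Code)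

namespace PartialMartingale

variable (m : PartialMartingale)

def ConstantAbove (σ : List Bool) : Prop :=
  ∀ τ : List Bool, σ <+: τ → ∀ q q' : ℚ, q ∈ m.toFun σ → q' ∈ m.toFun τ → q' = q

theorem dom_append_false_and_true {σ : List Bool} {b : Bool} (h : (m.toFun (σ ++ [b])).Dom) :
    (m.toFun (σ ++ [false])).Dom ∧ (m.toFun (σ ++ [true])).Dom := by
  cases b
  · exact ⟨h, by simpa using m.siblings σ false h⟩
  · exact ⟨by simpa using m.siblings σ true h, h⟩

theorem exists_int_eq_add_of_mem_append (hiv : m.IntegerValued) {τ : List Bool} {q : ℚ}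
    (hq : q ∈ m.toFun τ) (ρ : List Bool) {q' : ℚ} (hq' : q' ∈ m.toFun (τ ++ ρ)) :
    ∃ z : ℤ, q' = q + z := by
  induction ρ using List.reverseRecOn generalizing q' with
  | nil => exact ⟨0, by simpa using Part.mem_unique hq' (by simpa using hq)⟩
  | append_singleton ρ b ih =>
    rw [← List.append_assoc] at hq'
    obtain ⟨r, hr⟩ := Part.dom_iff_mem.1 <|
      m.domClosed _ _ (List.prefix_append _ _) (Part.dom_iff_mem.2 ⟨q', hq'⟩)
    obtain ⟨z, rfl⟩ := ih hr
    obtain ⟨k, rfl | rfl⟩ := hiv _ b _ q' hr hq'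
    · exact ⟨z + k, by push_cast; ring⟩
    · exact ⟨z - k, by push_cast; ring⟩

theorem le_mul_two_pow {q₀ : ℚ} (h₀ : q₀ ∈ m.toFun []) (σ : List Bool) {q : ℚ}
    (hq : q ∈ m.toFun σ) : q ≤ q₀ * 2 ^ σ.length := by
  induction σ using List.reverseRecOn generalizing q with
  | nil => simp [Part.mem_unique hq h₀]
  | append_singleton σ b ih =>
    obtain ⟨h0, h1⟩ := m.dom_append_false_and_true (Part.dom_iff_mem.2 ⟨q, hq⟩)
    have hparent := ih (m.fair σ _ _ (Part.get_mem h0) (Part.get_mem h1))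
    have := m.nonneg _ _ (Part.get_mem h0)
    have := m.nonneg _ _ (Part.get_mem h1)
    rw [List.length_append, List.length_singleton, pow_succ]
    cases b
    · rw [Part.mem_unique hq (Part.get_mem h0)]; linarith
    · rw [Part.mem_unique hq (Part.get_mem h1)]; linarith

theorem exists_nat_bound : ∃ C : ℕ, ∀ σ q, q ∈ m.toFun σ → q ≤ C * 2 ^ σ.length := by
  by_cases h : (m.toFun []).Dom
  · refine ⟨⌈(m.toFun []).get h⌉₊, fun σ q hq => ?_⟩
    calc q ≤ (m.toFun []).get h * 2 ^ σ.length := m.le_mul_two_pow (Part.get_mem h) σ hq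
      _ ≤ _ := by gcongr; exact Nat.le_ceil _
  · exact ⟨0, fun σ q hq =>
      absurd (m.domClosed _ _ List.nil_prefix (Part.dom_iff_mem.2 ⟨q, hq⟩)) h⟩

theorem constantAbove_of_forall_le {σ : List Bool}
    (hmin : ∀ τ q q', σ <+: τ → q ∈ m.toFun σ → q' ∈ m.toFun τ → q ≤ q') :
    m.ConstantAbove σ := by
  rintro _ ⟨ρ, rfl⟩ q q' hq hq'
  induction ρ using List.reverseRecOn generalizing q' with
  | nil => simpa using Part.mem_unique hq' (by simpa using hq)
  | append_singleton ρ b ih =>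
    rw [← List.append_assoc] at hq'
    obtain ⟨h0, h1⟩ := m.dom_append_false_and_true (Part.dom_iff_mem.2 ⟨q', hq'⟩)
    have hparent := ih _ (m.fair _ _ _ (Part.get_mem h0) (Part.get_mem h1))
    have hle0 := hmin _ _ _ ⟨ρ ++ [false], by simp⟩ hq (Part.get_mem h0)
    have hle1 := hmin _ _ _ ⟨ρ ++ [true], by simp⟩ hq (Part.get_mem h1)
    cases b
    · rw [Part.mem_unique hq' (Part.get_mem h0)]; linarith
    · rw [Part.mem_unique hq' (Part.get_mem h1)]; linarith

end PartialMartingale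

section Floor

variable {R : Type*} [Semiring R] [LinearOrder R] [IsStrictOrderedRing R] [FloorSemiring R]

theorem Nat.floor_lt_floor_of_add_one_le {a b : R} (ha : 0 ≤ a) (hab : a + 1 ≤ b) :
    ⌊a⌋₊ < ⌊b⌋₊ := by
  rw [← Nat.add_one_le_iff, ← Nat.floor_add_one ha]
  exact Nat.floor_le_floor hab

theorem finite_and_ncard_drops_le {v : ℕ → R} (hv : Antitone v) (hnn : ∀ s, 0 ≤ v s) :
    {s | v (s + 1) + 1 ≤ v s}.Finite ∧ {s | v (s + 1) + 1 ≤ v s}.ncard ≤ ⌊v 0⌋₊ := by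
  set D := {s | v (s + 1) + 1 ≤ v s}
  -- `s ↦ ⌊v (s + 1)⌋₊` is strictly decreasing on `D` and bounded by `⌊v 0⌋₊`.
  have hlt : ∀ t ∈ D, ∀ s < t, ⌊v (t + 1)⌋₊ < ⌊v (s + 1)⌋₊ := fun t ht s hst =>
    Nat.floor_lt_floor_of_add_one_le (hnn _) (ht.trans (hv (Nat.succ_le_of_lt hst)))
  have hmaps : Set.MapsTo (fun s => ⌊v (s + 1)⌋₊) D (Finset.range ⌊v 0⌋₊) := fun s hs => by
    simpa using Nat.floor_lt_floor_of_add_one_le (hnn _) (hs.trans (hv (Nat.zero_le s)))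
  have hinj : Set.InjOn (fun s => ⌊v (s + 1)⌋₊) D := fun s hs t ht hst => by
    rcases lt_trichotomy s t with h | h | h
    · exact absurd hst (hlt t ht s h).ne'
    · exact h
    · exact absurd hst (hlt s hs t h).ne
  refine ⟨Set.Finite.of_injOn hmaps hinj (Finset.finite_toSet _), ?_⟩
  simpa using Set.ncard_le_ncard_of_injOn _ hmaps hinj (Finset.finite_toSet _)

end Floor

theorem exists_forall_ge_eq_of_finite {α : Type*} {x : ℕ → α}
    (h : {s | x (s + 1) ≠ x s}.Finite) : ∃ N, ∀ s, N ≤ s → x s = x N := by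
  obtain ⟨M, hM⟩ := h.bddAbove
  refine ⟨M + 1, fun s hs => ?_⟩
  induction s, hs using Nat.le_induction with
  | base => rfl
  | succ s hs ih =>
    by_contra hne
    exact absurd (hM (show x (s + 1) ≠ x s by rwa [ih])) (by omega)

theorem pbDense_of_approx {S : Set (List Bool)} (F : ℕ → List Bool → List Bool)
    (h : List Bool → ℕ) (hF : Computable₂ F) (hh : Primrec h) (hpre : ∀ s σ, σ <+: F s σ)
    (hchanges : ∀ σ, {s | F (s + 1) σ ≠ F s σ}.Finite ∧ {s | F (s + 1) σ ≠ F s σ}.ncard ≤ h σ)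
    (hS : ∀ σ N, (∀ s, N ≤ s → F s σ = F N σ) → F N σ ∈ S) : PbDense S := by
  choose N hN using fun σ => exists_forall_ge_eq_of_finite (x := (F · σ)) (hchanges σ).1
  exact ⟨fun σ => F (N σ) σ, F, h, hF, hh, fun σ => hpre _ σ, fun σ => ⟨N σ, hN σ⟩, hchanges,
    fun σ => hS σ (N σ) (hN σ)⟩

-- `Encodable.encode` sends an integer `n ≥ 0` to `2 * n`, so `qencNum (qenc q)` is the numerator
-- of `q ≥ 0`.
def qencNum (k : ℕ) : ℕ := k.unpair.1 / 2

def qencLt (k' k : ℕ) : Bool := decide (qencNum k' * k.unpair.2 < qencNum k * k'.unpair.2)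

theorem qencNum_qenc {q : ℚ} (h : 0 ≤ q) : qencNum (qenc q) = q.num.toNat := by
  have h2 : Encodable.encode q.num = 2 * q.num.toNat := by
    rw [← Int.toNat_of_nonneg (Rat.num_nonneg.2 h)]; rfl
  simp [qencNum, qenc, Nat.unpair_pair, h2]

theorem qencLt_qenc_iff {q' q : ℚ} (h' : 0 ≤ q') (h : 0 ≤ q) :
    qencLt (qenc q') (qenc q) = true ↔ q' < q := by
  have h1 : (q'.num.toNat : ℤ) = q'.num := Int.toNat_of_nonneg (Rat.num_nonneg.2 h')
  have h2 : (q.num.toNat : ℤ) = q.num := Int.toNat_of_nonneg (Rat.num_nonneg.2 h)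
  rw [qencLt, decide_eq_true_iff, qencNum_qenc h', qencNum_qenc h, qenc, qenc,
    Nat.unpair_pair, Nat.unpair_pair, Rat.lt_iff, ← Nat.cast_lt (α := ℤ)]
  push_cast [h1, h2]
  exact Iff.rfl

theorem qencLt_self (k : ℕ) : qencLt k k = false := by simp [qencLt]

theorem primrec_qencLt : Primrec₂ qencLt := by
  have hnum : Primrec qencNum :=
    Primrec.nat_div.comp (Primrec.fst.comp Primrec.unpair) (Primrec.const 2)
  have hden : Primrec fun k : ℕ => k.unpair.2 := Primrec.snd.comp Primrec.unpair
  exact PrimrecPred.decide <| Primrec.nat_lt.comp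
    (Primrec.nat_mul.comp (hnum.comp Primrec.fst) (hden.comp Primrec.snd))
    (Primrec.nat_mul.comp (hnum.comp Primrec.snd) (hden.comp Primrec.fst))

def evalStage (c : Code) (s : ℕ) (σ : List Bool) : Option ℕ := c.evaln s (Encodable.encode σ)

theorem primrec_evalStage (c : Code) : Primrec₂ (evalStage c) :=
  Nat.Partrec.Code.primrec_evaln.comp
    ((Primrec.fst.pair (Primrec.const c)).pair (Primrec.encode.comp Primrec.snd))

theorem evalStage_mono {c : Code} {s s' : ℕ} {σ : List Bool} {k : ℕ} (h : s ≤ s')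
    (hk : evalStage c s σ = some k) : evalStage c s' σ = some k :=
  Nat.Partrec.Code.evaln_mono h hk

/- At stage `s` the search moves from `τ`, if its value `k` has appeared by stage `s + 1`, to the
first extension `τ ++ ρ` with `encode ρ ≤ s` whose value has appeared by then and is below `k`. -/
def tryExtension (c : Code) (s : ℕ) (τ : List Bool) (k i : ℕ) : Option (List Bool) :=
  (Encodable.decode i : Option (List Bool)).bind fun ρ =>
    (evalStage c (s + 1) (τ ++ ρ)).bind fun k' => cond (qencLt k' k) (some (τ ++ ρ)) none

def findDescent (c : Code) (s : ℕ) (τ : List Bool) (k : ℕ) : Option (List Bool) :=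
  ((List.range (s + 1)).filterMap (tryExtension c s τ k)).head?

def descentStep (c : Code) (s : ℕ) (τ : List Bool) : List Bool :=
  ((evalStage c (s + 1) τ).bind (findDescent c s τ)).getD τ

def descent (c : Code) : ℕ → List Bool → List Bool
  | 0, σ => σ
  | s + 1, σ => descentStep c s (descent c s σ)

theorem descent_succ (c : Code) (s : ℕ) (σ : List Bool) :
    descent c (s + 1) σ = descentStep c s (descent c s σ) := rfl

section Descent

variable {c : Code} {s : ℕ} {τ : List Bool}

theorem exists_of_findDescent_eq_some {k : ℕ} {x : List Bool}
    (hp : findDescent c s τ k = some x) :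
    ∃ ρ k', x = τ ++ ρ ∧ evalStage c (s + 1) (τ ++ ρ) = some k' ∧ qencLt k' k = true := by
  obtain ⟨i, -, hi⟩ := List.mem_filterMap.1 (List.mem_of_mem_head? hp)
  obtain ⟨ρ, -, hi⟩ := Option.bind_eq_some_iff.1 hi
  obtain ⟨k', hk', hi⟩ := Option.bind_eq_some_iff.1 hi
  cases hb : qencLt k' k <;> simp only [hb, cond_true, cond_false, Option.some.injEq,
    reduceCtorEq] at hi
  exact ⟨ρ, k', hi.symm, hk', hb⟩

theorem descentStep_eq_self_or :
    descentStep c s τ = τ ∨ ∃ k k' ρ, evalStage c (s + 1) τ = some k ∧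
      descentStep c s τ = τ ++ ρ ∧ evalStage c (s + 1) (τ ++ ρ) = some k' ∧
      qencLt k' k = true := by
  rcases hV : evalStage c (s + 1) τ with _ | k
  · simp [descentStep, hV]
  rcases hp : findDescent c s τ k with _ | x
  · simp [descentStep, hV, hp]
  obtain ⟨ρ, k', rfl, hk', hlt⟩ := exists_of_findDescent_eq_some hp
  exact Or.inr ⟨k, k', ρ, rfl, by simp [descentStep, hV, hp], hk', hlt⟩

theorem descentStep_ne_self {ρ : List Bool} {k k' : ℕ} (hρ : Encodable.encode ρ ≤ s)
    (hk : evalStage c (s + 1) τ = some k) (hk' : evalStage c (s + 1) (τ ++ ρ) = some k')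
    (hlt : qencLt k' k = true) : descentStep c s τ ≠ τ := by
  have hmem : τ ++ ρ ∈ (List.range (s + 1)).filterMap (tryExtension c s τ k) :=
    List.mem_filterMap.2 ⟨Encodable.encode ρ, List.mem_range.2 (by omega), by
      simp [tryExtension, Encodable.encodek, hk', hlt]⟩
  rcases hp : findDescent c s τ k with _ | x
  · exact absurd (List.head?_eq_none_iff.1 hp) (List.ne_nil_of_mem hmem)
  obtain ⟨ρ', k'', rfl, hk'', hlt''⟩ := exists_of_findDescent_eq_some hp
  simp only [descentStep, hk, Option.bind_some, hp, Option.getD_some, ne_eq,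
    List.append_right_eq_self]
  rintro rfl
  rw [List.append_nil, hk, Option.some.injEq] at hk''
  rw [hk'', qencLt_self] at hlt''
  exact Bool.false_ne_true hlt''

theorem prefix_descentStep : τ <+: descentStep c s τ := by
  rcases descentStep_eq_self_or (c := c) (s := s) (τ := τ) with h | ⟨-, -, ρ, -, h, -⟩ <;>
    rw [h]
  exact List.prefix_append _ _

theorem prefix_descent (c : Code) (s : ℕ) (σ : List Bool) : σ <+: descent c s σ := by
  induction s with
  | zero => exact List.prefix_refl σ
  | succ s ih => exact ih.trans prefix_descentStep

theorem primrec_descentStep (c : Code) : Primrec₂ (descentStep c) := by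
  have hV : Primrec fun p : ℕ × List Bool => evalStage c (p.1 + 1) p.2 :=
    (primrec_evalStage c).comp (Primrec.succ.comp Primrec.fst) Primrec.snd
  have htry : Primrec₂ fun (p : (ℕ × List Bool) × ℕ) (i : ℕ) =>
      tryExtension c p.1.1 p.1.2 p.2 i := by
    refine Primrec.option_bind (Primrec.decode.comp Primrec.snd) ?_
    have hext : Primrec fun q : (((ℕ × List Bool) × ℕ) × ℕ) × List Bool => q.1.1.1.2 ++ q.2 :=
      Primrec.list_append.comp (Primrec.snd.comp (Primrec.fst.comp (Primrec.fst.comp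
        Primrec.fst))) Primrec.snd
    refine Primrec.option_bind ((primrec_evalStage c).comp (Primrec.succ.comp
      (Primrec.fst.comp (Primrec.fst.comp (Primrec.fst.comp Primrec.fst)))) hext) ?_
    exact (Primrec.cond (primrec_qencLt.comp Primrec.snd (Primrec.snd.comp (Primrec.fst.comp
      (Primrec.fst.comp Primrec.fst))))
      (Primrec.option_some.comp (hext.comp Primrec.fst)) (Primrec.const none)).to₂
  have hfind : Primrec₂ fun (p : ℕ × List Bool) (k : ℕ) => findDescent c p.1 p.2 k :=
    Primrec.list_head?.comp <| Primrec.listFilterMap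
      (Primrec.list_range.comp (Primrec.succ.comp (Primrec.fst.comp Primrec.fst))) htry
  exact Primrec.option_getD.comp (Primrec.option_bind hV hfind) Primrec.snd

theorem computable₂_descent (c : Code) : Computable₂ (descent c) := by
  have h := Computable.nat_rec (f := Prod.fst) (g := Prod.snd)
    (h := fun (_ : ℕ × List Bool) (q : ℕ × List Bool) => descentStep c q.1 q.2)
    Computable.fst Computable.snd
    ((primrec_descentStep c).to_comp.comp (Computable.fst.comp Computable.snd)
      (Computable.snd.comp Computable.snd)).to₂
  refine Computable.of_eq h ?_
  rintro ⟨s, σ⟩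
  induction s with
  | zero => rfl
  | succ s ih => simp only [descent] at ih ⊢; rw [← ih]

end Descent

def CodeFor (c : Code) (m : PartialMartingale) : Prop :=
  ∀ σ k, k ∈ c.eval (Encodable.encode σ) ↔ ∃ q ∈ m.toFun σ, qenc q = k

theorem PartialMartingale.Comp.exists_codeFor {m : PartialMartingale} (hc : m.Comp) :
    ∃ c : Code, CodeFor c m := by
  obtain ⟨c, hcc⟩ := Nat.Partrec.Code.exists_code.1 hc
  refine ⟨c, fun σ k => ?_⟩
  simp [hcc, Encodable.encodek]

namespace CodeFor

variable {c : Code} {m : PartialMartingale} {s : ℕ} {τ : List Bool}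

theorem exists_mem_of_evalStage (hcm : CodeFor c m) {k : ℕ} (h : evalStage c s τ = some k) :
    ∃ q ∈ m.toFun τ, qenc q = k :=
  (hcm τ k).1 (Nat.Partrec.Code.evaln_sound h)

theorem exists_evalStage (hcm : CodeFor c m) {q : ℚ} (hq : q ∈ m.toFun τ) :
    ∃ s, evalStage c s τ = some (qenc q) :=
  Nat.Partrec.Code.evaln_complete.1 ((hcm τ _).2 ⟨q, hq, rfl⟩)

theorem descentStep_eq_self_of_not_dom (hcm : CodeFor c m) (h : ¬(m.toFun τ).Dom) :
    descentStep c s τ = τ := by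
  rcases descentStep_eq_self_or (c := c) (s := s) (τ := τ) with h' | ⟨k, -, -, hk, -⟩
  · exact h'
  obtain ⟨q, hq, -⟩ := hcm.exists_mem_of_evalStage hk
  exact absurd (Part.dom_iff_mem.2 ⟨q, hq⟩) h

theorem exists_drop_of_descentStep_ne (hcm : CodeFor c m) (hiv : m.IntegerValued)
    (h : descentStep c s τ ≠ τ) :
    ∃ q q', q ∈ m.toFun τ ∧ q' ∈ m.toFun (descentStep c s τ) ∧ q' + 1 ≤ q := by
  rcases descentStep_eq_self_or (c := c) (s := s) (τ := τ) with
    h' | ⟨k, k', ρ, hk, hstep, hk', hlt⟩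
  · exact absurd h' h
  obtain ⟨q, hq, rfl⟩ := hcm.exists_mem_of_evalStage hk
  obtain ⟨q', hq', rfl⟩ := hcm.exists_mem_of_evalStage hk'
  rw [qencLt_qenc_iff (m.nonneg _ _ hq') (m.nonneg _ _ hq)] at hlt
  obtain ⟨z, rfl⟩ := m.exists_int_eq_add_of_mem_append hiv hq ρ hq'
  have hz : (z : ℚ) ≤ -1 := by
    have : z < 0 := by exact_mod_cast (show (z : ℚ) < 0 by linarith)
    exact_mod_cast Int.le_sub_one_of_lt this
  exact ⟨q, q + z, hq, hstep ▸ hq', by linarith⟩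

theorem changes_finite_and_ncard_le (hcm : CodeFor c m) (hiv : m.IntegerValued) {C : ℕ}
    (hC : ∀ σ q, q ∈ m.toFun σ → q ≤ C * 2 ^ σ.length) (σ : List Bool) :
    {s | descent c (s + 1) σ ≠ descent c s σ}.Finite ∧
      {s | descent c (s + 1) σ ≠ descent c s σ}.ncard ≤ C * 2 ^ σ.length := by
  by_cases hσ : (m.toFun σ).Dom
  swap
  · have hconst : ∀ s, descent c s σ = σ := fun s => by
      induction s with
      | zero => rfl
      | succ s ih => rw [descent_succ, ih, hcm.descentStep_eq_self_of_not_dom hσ]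
    simp [hconst]
  have hdom : ∀ s, (m.toFun (descent c s σ)).Dom := fun s => by
    induction s with
    | zero => exact hσ
    | succ s ih =>
      rw [descent_succ]
      by_cases h : descentStep c s (descent c s σ) = descent c s σ
      · rwa [h]
      · obtain ⟨-, q', -, hq', -⟩ := hcm.exists_drop_of_descentStep_ne hiv h
        exact Part.dom_iff_mem.2 ⟨q', hq'⟩
  set v : ℕ → ℚ := fun s => (m.toFun (descent c s σ)).get (hdom s)
  have hv : ∀ s q, q ∈ m.toFun (descent c s σ) → v s = q := fun s q hq =>
    Part.get_eq_of_mem hq _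
  have hdrop : ∀ s, descent c (s + 1) σ ≠ descent c s σ → v (s + 1) + 1 ≤ v s := fun s h => by
    obtain ⟨q, q', hq, hq', hle⟩ := hcm.exists_drop_of_descentStep_ne hiv h
    rwa [hv s q hq, hv (s + 1) q' hq']
  have hanti : Antitone v := antitone_nat_of_succ_le fun s => by
    by_cases h : descent c (s + 1) σ = descent c s σ
    · exact (hv s _ (h ▸ Part.get_mem (hdom (s + 1)))).ge
    · linarith [hdrop s h]
  obtain ⟨hfin, hcard⟩ :=
    finite_and_ncard_drops_le hanti fun s => m.nonneg _ _ (Part.get_mem _)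
  refine ⟨hfin.subset hdrop, (Set.ncard_le_ncard hdrop hfin).trans (hcard.trans ?_)⟩
  exact Nat.floor_le_of_le (by exact_mod_cast hC σ _ (Part.get_mem (hdom 0)))

theorem le_of_descent_stable (hcm : CodeFor c m) {σ : List Bool} {N : ℕ}
    (hN : ∀ s, N ≤ s → descent c s σ = descent c N σ) (τ : List Bool) (q q' : ℚ)
    (hτ : descent c N σ <+: τ) (hq : q ∈ m.toFun (descent c N σ)) (hq' : q' ∈ m.toFun τ) :
    q ≤ q' := by
  obtain ⟨ρ, rfl⟩ := hτ
  by_contra! hlt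
  obtain ⟨s₁, hs₁⟩ := hcm.exists_evalStage hq
  obtain ⟨s₂, hs₂⟩ := hcm.exists_evalStage hq'
  set s := N + s₁ + s₂ + Encodable.encode ρ
  -- by stage `s` the search has seen the smaller value above the limit, so it would move on
  refine descentStep_ne_self (s := s) (by omega) (evalStage_mono (by omega) hs₁)
    (evalStage_mono (by omega) hs₂)
    ((qencLt_qenc_iff (m.nonneg _ _ hq') (m.nonneg _ _ hq)).2 hlt) ?_
  calc descentStep c s (descent c N σ)
      = descent c (s + 1) σ := by rw [descent_succ, hN s (by omega)]
    _ = descent c N σ := hN (s + 1) (by omega)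

end CodeFor

/-- For every partial computable integer-valued martingale `m` there
is a pb-dense set of strings `S` such that `m` never changes its capital above any
string of `S`; consequently every pb-generic real has a prefix beyond which `m`
never changes its capital. -/
theorem exists_pbDense_conservation (m : PartialMartingale)
    (hiv : m.IntegerValued) (hc : m.Comp) :
    (∃ S : Set (List Bool), PbDense S ∧
      ∀ σ ∈ S, ∀ τ : List Bool, σ <+: τ →
        ∀ q q' : ℚ, q ∈ m.toFun σ → q' ∈ m.toFun τ → q' = q) ∧
    (∀ X : ℕ → Bool, PbGeneric X → ∃ n, ∀ τ : List Bool, str X n <+: τ →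
      ∀ q q' : ℚ, q ∈ m.toFun (str X n) → q' ∈ m.toFun τ → q' = q) := by
  obtain ⟨c, hcm⟩ := hc.exists_codeFor
  obtain ⟨C, hC⟩ := m.exists_nat_bound
  have hpow : Primrec fun σ : List Bool => C * 2 ^ σ.length :=
    Primrec.nat_mul.comp (Primrec.const C) <|
      (Primrec₂.unpaired'.1 Nat.Primrec.pow).comp (Primrec.const 2) Primrec.list_length
  have hdense : PbDense {σ | m.ConstantAbove σ} :=
    pbDense_of_approx (descent c) _ (computable₂_descent c) hpow (prefix_descent c)
      (hcm.changes_finite_and_ncard_le hiv hC)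
      fun _ _ hN => m.constantAbove_of_forall_le (hcm.le_of_descent_stable hN)
  refine ⟨⟨_, hdense, fun σ hσ => hσ⟩, fun X hX => ?_⟩
  obtain ⟨n, hn⟩ := hX _ hdense
  exact ⟨n, hn⟩

end IVR
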